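/- arXiv:2311.04172 — 4 statements merged into one kernel-verified Lean document; each statement's English description precedes it below -/
import Mathlib

section
/- Let f : [0,1]^d → [0,∞) be continuous and satisfy Assumption A, and let S = (S_1,…,S_d) be the inverse Knothe–Rosenblatt map of f. Then S is triangular (S_j depends only on x_{1:j}), for every j and every fixed x_{1:j-1} the map x_j ↦ S_j(x_{1:j-1}, x_j) is a strictly increasing bijection of [0,1] onto [0,1], S : [0,1]^d → [0,1]^d is a bijection, and for every x in the complement of the Lebesgue null set N_{d-1} := {x ∈ [0,1]^d : s_{d-1}(x_{1:d-1}) = 0}, the partial derivatives ∂_{x_j} S_j(x_{1:j}) exist and satisfy ∏_{j=1}^d ∂_{x_j} S_j(x_{1:j}) = f(x) / ∫_{[0,1]^d} f(y) dy. -/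
open MeasureTheory

noncomputable section

def cube (d : ℕ) : Set (Fin d → ℝ) := Set.univ.pi fun _ => Set.Icc (0:ℝ) 1

noncomputable def sFun (d : ℕ) (f : (Fin d → ℝ) → ℝ) (j : ℕ) (x : Fin d → ℝ) : ℝ :=
  ∫ y in cube d, f (fun i => if (i : ℕ) < j then x i else y i)

noncomputable def KRinv (d : ℕ) (f : (Fin d → ℝ) → ℝ) (x : Fin d → ℝ) : Fin d → ℝ :=
  fun j => if 0 < sFun d f (j : ℕ) x
    then (∫ t in (0:ℝ)..(x j), sFun d f ((j : ℕ) + 1) (Function.update x j t)) / sFun d f (j : ℕ) x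
    else x j

def AssumptionA (d : ℕ) (f : (Fin d → ℝ) → ℝ) : Prop :=
  volume {x : Fin d → ℝ | x ∈ cube d ∧ f x = 0} = 0 ∧
  ∀ i : Fin d, ∀ x ∈ cube d,
    (∀ t ∈ Set.Icc (0:ℝ) 1, f (Function.update x i t) = 0) ∨
    volume {t : ℝ | t ∈ Set.Icc (0:ℝ) 1 ∧ f (Function.update x i t) = 0} = 0


/-!
By Fubini in the `j`-th coordinate, `sFun d f j x = ∫₀¹ sFun d f (j + 1) (update x j t) dt`.
So if `sFun d f j x > 0`, the slice `t ↦ KRinv d f (update x j t) j` is the primitive of the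
continuous nonnegative function `t ↦ sFun d f (j + 1) (update x j t)`, normalised to have value
`1` at `t = 1`. That function cannot vanish on a nondegenerate subinterval: it would make `f`
vanish on a segment of every axis-parallel line in direction `j` through those points, hence
(Assumption A) on the whole line, hence force `sFun d f j x = 0`. So the slice is strictly
increasing and onto `[0,1]`, with derivative `sFun d f (j + 1) / sFun d f j`; if
`sFun d f j x = 0` it is the identity. A triangular map with bijective slices is a bijection of the
cube, solved one coordinate at a time. Since `sFun d f j x = 0` forces `sFun d f (j + 1) x = 0`,
the set where `sFun d f (d - 1)` vanishes lies in `{f = 0}`, and off it all the `sFun d f j x` are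
positive, so the product of the derivatives telescopes to `sFun d f d x / sFun d f 0 x`.
-/

open Set Function

section Fubini

variable {n : ℕ} {α : Fin (n + 1) → Type*} [∀ i, MeasurableSpace (α i)]
  {μ : ∀ i, Measure (α i)} [∀ i, SigmaFinite (μ i)]

theorem measurePreserving_update_pi (j : Fin (n + 1)) [IsProbabilityMeasure (μ j)] :
    MeasurePreserving (fun p : α j × (∀ i, α i) => update p.2 j p.1)
      ((μ j).prod (Measure.pi μ)) (Measure.pi μ) := by
  have he := measurePreserving_piFinSuccAbove μ j
  have hremove : MeasurePreserving (fun y : ∀ i, α i => j.removeNth y) (Measure.pi μ) _ :=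
    measurePreserving_snd.comp he
  convert he.symm.comp ((MeasurePreserving.id (μ j)).prod hremove) using 1
  funext p
  exact (Fin.insertNth_removeNth j p.1 p.2).symm

theorem integral_pi_eq_integral_integral_update (j : Fin (n + 1)) [IsProbabilityMeasure (μ j)]
    {E : Type*} [NormedAddCommGroup E] [NormedSpace ℝ E] {F : (∀ i, α i) → E}
    (hF : Integrable F (Measure.pi μ)) :
    ∫ y, F y ∂Measure.pi μ = ∫ s, ∫ y, F (update y j s) ∂Measure.pi μ ∂μ j := by
  have hΦ := measurePreserving_update_pi (μ := μ) j
  calc ∫ y, F y ∂Measure.pi μ = ∫ p, F (update p.2 j p.1) ∂(μ j).prod (Measure.pi μ) := by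
        conv_lhs => rw [← hΦ.map_eq]
        exact integral_map hΦ.measurable.aemeasurable
          (by rw [hΦ.map_eq]; exact hF.aestronglyMeasurable)
    _ = _ := integral_prod _ (hΦ.integrable_comp_of_integrable hF)

end Fubini

section Positivity

variable {X : Type*} [TopologicalSpace X] [T2Space X] [MeasurableSpace X] [OpensMeasurableSpace X]
  {μ : Measure X} [μ.IsOpenPosMeasure] [IsFiniteMeasureOnCompacts μ] {s : Set X} {g : X → ℝ}

theorem ContinuousOn.setIntegral_pos_of_pos (hg : ContinuousOn g s) (hs : IsCompact s)
    (hsi : s ⊆ closure (interior s)) (hg0 : ∀ x ∈ s, 0 ≤ g x) {x₀ : X} (hx₀ : x₀ ∈ s)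
    (hpos : 0 < g x₀) : 0 < ∫ x in s, g x ∂μ := by
  rw [setIntegral_pos_iff_support_of_nonneg_ae (ae_restrict_of_forall_mem hs.measurableSet hg0)
    (hg.integrableOn_compact hs)]
  obtain ⟨U, hU, hx₀U, hUg⟩ : ∃ U, IsOpen U ∧ x₀ ∈ U ∧ U ∩ s ⊆ {x | 0 < g x} :=
    mem_nhdsWithin.1 ((hg x₀ hx₀).eventually (lt_mem_nhds hpos))
  have hne : (U ∩ interior s).Nonempty := mem_closure_iff.1 (hsi hx₀) U hU hx₀U
  refine ((hU.inter isOpen_interior).measure_pos μ hne).trans_le (measure_mono ?_)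
  rintro x ⟨hxU, hxs⟩
  exact ⟨(hUg ⟨hxU, interior_subset hxs⟩).ne', interior_subset hxs⟩

theorem ContinuousOn.eq_zero_of_setIntegral_eq_zero (hg : ContinuousOn g s) (hs : IsCompact s)
    (hsi : s ⊆ closure (interior s)) (hg0 : ∀ x ∈ s, 0 ≤ g x)
    (hint : ∫ x in s, g x ∂μ = 0) : ∀ x ∈ s, g x = 0 := fun x hx =>
  ((hg0 x hx).eq_or_lt.resolve_right fun hpos =>
    (hg.setIntegral_pos_of_pos hs hsi hg0 hx hpos).ne' hint).symm

end Positivity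

theorem hasDerivWithinAt_integral_Icc {g : ℝ → ℝ} {a b t : ℝ} (hg : ContinuousOn g (Icc a b))
    (ht : t ∈ Icc a b) : HasDerivWithinAt (fun u => ∫ v in a..u, g v) (g t) (Icc a b) t := by
  have : Fact (t ∈ Icc a b) := ⟨ht⟩
  exact intervalIntegral.integral_hasDerivWithinAt_right
    (hg.mono (uIcc_subset_Icc (left_mem_Icc.2 (ht.1.trans ht.2)) ht)).intervalIntegrable
    (hg.stronglyMeasurableAtFilter_nhdsWithin measurableSet_Icc t) (hg t ht)

theorem strictMonoOn_integral_of_pos {g : ℝ → ℝ} {a b : ℝ} (hg : IntegrableOn g (Icc a b))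
    (hpos : ∀ t₁ t₂, a ≤ t₁ → t₁ < t₂ → t₂ ≤ b → 0 < ∫ u in t₁..t₂, g u) :
    StrictMonoOn (fun t => ∫ u in a..t, g u) (Icc a b) := by
  intro t₁ h₁ t₂ h₂ h₁₂
  have hint : ∀ t ∈ Icc a b, IntervalIntegrable g volume a t := fun t ht =>
    (hg.mono_set (uIcc_subset_Icc (left_mem_Icc.2 (ht.1.trans ht.2)) ht)).intervalIntegrable
  rw [← sub_pos, intervalIntegral.integral_interval_sub_left (hint t₂ h₂) (hint t₁ h₁)]
  exact hpos t₁ t₂ h₁.1 h₁₂ h₂.2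

section IntermediateValue

variable {α δ : Type*} [ConditionallyCompleteLinearOrder α] [TopologicalSpace α]
  [OrderTopology α] [DenselyOrdered α] [LinearOrder δ] [TopologicalSpace δ]
  [OrderClosedTopology δ]

theorem ContinuousOn.bijOn_Icc_of_strictMonoOn {g : α → δ} {a b : α} (hab : a ≤ b)
    (hg : ContinuousOn g (Icc a b)) (hm : StrictMonoOn g (Icc a b)) :
    BijOn g (Icc a b) (Icc (g a) (g b)) :=
  ⟨fun _ ht => ⟨hm.monotoneOn (left_mem_Icc.2 hab) ht ht.1,
      hm.monotoneOn ht (right_mem_Icc.2 hab) ht.2⟩,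
    hm.injOn, hg.surjOn_Icc (left_mem_Icc.2 hab) (right_mem_Icc.2 hab)⟩

end IntermediateValue

theorem Finset.prod_range_div_of_ne_zero {G₀ : Type*} [CommGroupWithZero G₀] (g : ℕ → G₀)
    (n : ℕ) (hg : ∀ k ≤ n - 1, g k ≠ 0) : ∏ i ∈ range n, g (i + 1) / g i = g n / g 0 := by
  induction n with
  | zero => simp [div_self (hg 0 le_rfl)]
  | succ n ih =>
    rw [Finset.prod_range_succ, ih fun k hk => hg k (by omega),
      div_mul_div_cancel₀' (hg n (by omega))]

section Triangular

variable {d : ℕ} {α : Type*} {s : Set α} {T : (Fin d → α) → Fin d → α}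
  (htri : ∀ j x y, (∀ i ≤ j, x i = y i) → T x j = T y j)
include htri

theorem slice_congr_of_triangular {j : Fin d} {x y : Fin d → α} (hxy : ∀ i < j, x i = y i)
    (t : α) : T (update x j t) j = T (update y j t) j := by
  refine htri j _ _ fun i hi => ?_
  rcases hi.lt_or_eq with hi | rfl
  · simp [update_of_ne hi.ne, hxy i hi]
  · simp

theorem injOn_univ_pi_of_triangular
    (hslice : ∀ j, ∀ x ∈ univ.pi fun _ => s, InjOn (fun t => T (update x j t) j) s) :
    InjOn T (univ.pi fun _ => s) := by
  intro x hx y hy hxy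
  funext j
  induction j using WellFoundedLT.induction with
  | ind j ih =>
    refine hslice j x hx (hx j trivial) (hy j trivial) ?_
    simp only [update_eq_self, slice_congr_of_triangular htri ih]
    exact congrFun hxy j

theorem surjOn_univ_pi_of_triangular
    (hslice : ∀ j, ∀ x ∈ univ.pi fun _ => s, SurjOn (fun t => T (update x j t) j) s s) :
    SurjOn T (univ.pi fun _ => s) (univ.pi fun _ => s) := by
  intro z hz
  -- Changing the `k`-th coordinate does not affect the values of `T` at indices below `k`.
  have key : ∀ k ≤ d, ∃ x ∈ univ.pi fun _ => s, ∀ j : Fin d, (j : ℕ) < k → T x j = z j := by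
    intro k
    induction k with
    | zero => exact fun _ => ⟨z, hz, fun j hj => absurd hj (Nat.not_lt_zero _)⟩
    | succ k ih =>
      intro hk
      obtain ⟨x, hx, hxz⟩ := ih (by omega)
      set j : Fin d := ⟨k, hk⟩
      obtain ⟨t, ht, htz⟩ := hslice j x hx (hz j trivial)
      refine ⟨update x j t, (update_mem_pi_iff_of_mem hx).2 fun _ => ht, fun i hi => ?_⟩
      rcases (Nat.lt_succ_iff.1 hi).lt_or_eq with hik | hik
      · rw [← hxz i hik]
        exact htri i _ _ fun i' hi' => update_of_ne (hi'.trans_lt hik).ne t x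
      · obtain rfl : i = j := Fin.ext hik
        exact htz
  obtain ⟨x, hx, hxz⟩ := key d le_rfl
  exact ⟨x, hx, funext fun j => hxz j j.isLt⟩

theorem bijOn_univ_pi_of_triangular
    (hslice : ∀ j, ∀ x ∈ univ.pi fun _ => s, BijOn (fun t => T (update x j t) j) s s) :
    BijOn T (univ.pi fun _ => s) (univ.pi fun _ => s) :=
  ⟨fun x hx j _ => by simpa using (hslice j x hx).mapsTo (hx j trivial),
    injOn_univ_pi_of_triangular htri fun j x hx => (hslice j x hx).injOn,
    surjOn_univ_pi_of_triangular htri fun j x hx => (hslice j x hx).surjOn⟩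

end Triangular

section Cube

variable {d : ℕ}

lemma mem_cube {x : Fin d → ℝ} : x ∈ cube d ↔ ∀ i, x i ∈ Icc (0:ℝ) 1 := mem_univ_pi

lemma isCompact_cube (d : ℕ) : IsCompact (cube d) := isCompact_univ_pi fun _ => isCompact_Icc

lemma measurableSet_cube (d : ℕ) : MeasurableSet (cube d) := (isCompact_cube d).measurableSet

lemma Icc_subset_closure_interior_Icc {a b : ℝ} (hab : a ≠ b) :
    Icc a b ⊆ closure (interior (Icc a b)) := by
  simp [closure_Ioo hab]

lemma cube_subset_closure_interior (d : ℕ) : cube d ⊆ closure (interior (cube d)) := by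
  rw [cube, interior_pi_set finite_univ, closure_pi_set]
  exact pi_mono fun _ _ => Icc_subset_closure_interior_Icc zero_ne_one

lemma update_mem_cube {x : Fin d → ℝ} (hx : x ∈ cube d) (j : Fin d) {t : ℝ}
    (ht : t ∈ Icc (0:ℝ) 1) : update x j t ∈ cube d :=
  (update_mem_pi_iff_of_mem hx).2 fun _ => ht

instance : IsProbabilityMeasure (volume.restrict (Icc (0:ℝ) 1)) := ⟨by simp⟩

lemma volume_restrict_cube (d : ℕ) :
    volume.restrict (cube d) = Measure.pi fun _ => volume.restrict (Icc (0:ℝ) 1) := by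
  rw [cube, volume_pi, Measure.restrict_pi_pi]

theorem setIntegral_cube_eq_integral_update {F : (Fin d → ℝ) → ℝ} (hF : IntegrableOn F (cube d))
    (j : Fin d) :
    ∫ y in cube d, F y = ∫ s in Icc (0:ℝ) 1, ∫ y in cube d, F (update y j s) := by
  obtain ⟨n, rfl⟩ := Nat.exists_eq_succ_of_ne_zero j.pos.ne'
  rw [IntegrableOn, volume_restrict_cube] at hF
  rw [volume_restrict_cube]
  exact integral_pi_eq_integral_integral_update j hF

theorem exists_continuous_eqOn_cube {f : (Fin d → ℝ) → ℝ} (hf : ContinuousOn f (cube d)) :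
    ∃ g : (Fin d → ℝ) → ℝ, Continuous g ∧ EqOn g f (cube d) := by
  let p : (Fin d → ℝ) → Fin d → ℝ := fun x i => projIcc 0 1 zero_le_one (x i)
  have hp : Continuous p := continuous_pi fun i => continuous_subtype_val.comp
    (continuous_projIcc.comp (continuous_apply i))
  refine ⟨f ∘ p, hf.comp_continuous hp fun x => mem_cube.2 fun i => (projIcc 0 1 _ (x i)).2,
    fun x hx => congrArg f (funext fun i => congrArg Subtype.val (projIcc_of_mem _ (hx i trivial)))⟩

end Cube

section SliceIntegrals

variable {d : ℕ} {f : (Fin d → ℝ) → ℝ} {x : Fin d → ℝ}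

lemma mix_mem_cube (j : ℕ) {y : Fin d → ℝ} (hx : x ∈ cube d) (hy : y ∈ cube d) :
    (fun i : Fin d => if (i : ℕ) < j then x i else y i) ∈ cube d :=
  fun i _ => by dsimp only; split_ifs; exacts [hx i trivial, hy i trivial]

lemma continuous_mix (j : ℕ) :
    Continuous fun p : (Fin d → ℝ) × (Fin d → ℝ) => fun i : Fin d =>
      if (i : ℕ) < j then p.1 i else p.2 i :=
  continuous_pi fun i => by split_ifs <;> fun_prop

lemma continuousOn_comp_mix (hfc : ContinuousOn f (cube d)) (j : ℕ) (hx : x ∈ cube d) :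
    ContinuousOn (fun y => f fun i : Fin d => if (i : ℕ) < j then x i else y i) (cube d) :=
  hfc.comp ((continuous_mix j).comp (Continuous.prodMk_right x)).continuousOn
    fun _ hy => mix_mem_cube j hx hy

lemma sFun_congr {j : ℕ} {y : Fin d → ℝ} (h : ∀ i : Fin d, (i : ℕ) < j → x i = y i) :
    sFun d f j x = sFun d f j y := by
  unfold sFun
  congr with z
  congr with i
  split_ifs with hi
  exacts [h i hi, rfl]

lemma sFun_update_of_le {j : ℕ} {i : Fin d} (hji : j ≤ i) (t : ℝ) :
    sFun d f j (update x i t) = sFun d f j x :=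
  sFun_congr fun k hk => update_of_ne (Fin.ne_of_val_ne (by omega)) t x

lemma sFun_eq_of_eqOn {g : (Fin d → ℝ) → ℝ} (hfg : EqOn f g (cube d)) (hx : x ∈ cube d)
    (j : ℕ) : sFun d f j x = sFun d g j x :=
  setIntegral_congr_fun (measurableSet_cube d) fun _ hy => hfg (mix_mem_cube j hx hy)

lemma continuous_sFun (hf : Continuous f) (j : ℕ) : Continuous (sFun d f j) :=
  continuous_parametric_integral_of_continuous (f := fun x y : Fin d → ℝ => f fun i : Fin d =>
    if (i : ℕ) < j then x i else y i) (hf.comp (continuous_mix j)) (isCompact_cube d)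

lemma continuousOn_sFun (hfc : ContinuousOn f (cube d)) (j : ℕ) :
    ContinuousOn (sFun d f j) (cube d) := by
  obtain ⟨g, hg, hgf⟩ := exists_continuous_eqOn_cube hfc
  exact (continuous_sFun hg j).continuousOn.congr fun _ hx => sFun_eq_of_eqOn hgf.symm hx j

lemma sFun_nonneg (hfnn : ∀ x ∈ cube d, 0 ≤ f x) (j : ℕ) (hx : x ∈ cube d) :
    0 ≤ sFun d f j x :=
  setIntegral_nonneg (measurableSet_cube d) fun _ hy => hfnn _ (mix_mem_cube j hx hy)

lemma sFun_of_le {j : ℕ} (hj : d ≤ j) (x : Fin d → ℝ) : sFun d f j x = f x := by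
  have hmix : ∀ y : Fin d → ℝ, (fun i : Fin d => if (i : ℕ) < j then x i else y i) = x :=
    fun y => funext fun i => if_pos (i.isLt.trans_le hj)
  simp [sFun, hmix, volume_restrict_cube]

lemma sFun_zero (x : Fin d → ℝ) : sFun d f 0 x = ∫ y in cube d, f y := by
  simp [sFun]

lemma continuousOn_sFun_update (hfc : ContinuousOn f (cube d)) (hx : x ∈ cube d) (j : Fin d)
    (k : ℕ) : ContinuousOn (fun s => sFun d f k (update x j s)) (Icc 0 1) :=
  (continuousOn_sFun hfc k).comp (by fun_prop) fun _ hs => update_mem_cube hx j hs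

lemma mix_update_eq_update_mix (j : Fin d) (s : ℝ) (y : Fin d → ℝ) :
    (fun i : Fin d => if (i : ℕ) < j + 1 then update x j s i else y i) =
      update (fun i : Fin d => if (i : ℕ) < j + 1 then x i else y i) j s := by
  funext i
  rcases eq_or_ne i j with rfl | hij
  · simp
  · simp [update_of_ne hij]

lemma mix_update_eq_mix_succ_update (j : Fin d) (s : ℝ) (y : Fin d → ℝ) :
    (fun i : Fin d => if (i : ℕ) < j then x i else update y j s i) =
      fun i : Fin d => if (i : ℕ) < j + 1 then update x j s i else y i := by
  funext i
  rcases lt_trichotomy (i : ℕ) j with hij | hij | hij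
  · simp [hij, hij.trans (Nat.lt_succ_self _), update_of_ne (Fin.ne_of_val_ne hij.ne)]
  · simp [Fin.ext hij]
  · simp [hij.not_gt, (Nat.succ_le_of_lt hij).not_gt, update_of_ne (Fin.ne_of_val_ne hij.ne')]

theorem sFun_eq_setIntegral_sFun_succ (hfc : ContinuousOn f (cube d)) (hx : x ∈ cube d)
    (j : Fin d) :
    sFun d f j x = ∫ s in Icc (0:ℝ) 1, sFun d f (j + 1) (update x j s) := by
  rw [sFun, setIntegral_cube_eq_integral_update
    ((continuousOn_comp_mix hfc j hx).integrableOn_compact (isCompact_cube d)) j]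
  simp only [mix_update_eq_mix_succ_update, sFun]

end SliceIntegrals

section Vanishing

variable {d : ℕ} {f : (Fin d → ℝ) → ℝ} {x : Fin d → ℝ}
  (hfc : ContinuousOn f (cube d)) (hfnn : ∀ x ∈ cube d, 0 ≤ f x)
include hfc hfnn

lemma sFun_succ_update_eq_zero (hx : x ∈ cube d) (j : Fin d) (h : sFun d f j x = 0) :
    ∀ s ∈ Icc (0:ℝ) 1, sFun d f (j + 1) (update x j s) = 0 :=
  (continuousOn_sFun_update hfc hx j _).eq_zero_of_setIntegral_eq_zero isCompact_Icc
    (Icc_subset_closure_interior_Icc zero_ne_one)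
    (fun _ hs => sFun_nonneg hfnn _ (update_mem_cube hx j hs))
    ((sFun_eq_setIntegral_sFun_succ hfc hx j).symm.trans h)

lemma sFun_eq_zero_of_le (hx : x ∈ cube d) {k m : ℕ} (hkm : k ≤ m) (hmd : m ≤ d)
    (h : sFun d f k x = 0) : sFun d f m x = 0 := by
  induction m, hkm using Nat.le_induction with
  | base => exact h
  | succ m _ ih =>
    have := sFun_succ_update_eq_zero hfc hfnn hx ⟨m, hmd⟩ (ih (by omega)) _ (hx ⟨m, hmd⟩ trivial)
    rwa [update_eq_self] at this

lemma sFun_succ_update_eq_zero_iff (hx : x ∈ cube d) (j : Fin d) {s : ℝ}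
    (hs : s ∈ Icc (0:ℝ) 1) :
    sFun d f (j + 1) (update x j s) = 0 ↔
      ∀ y ∈ cube d, f (update (fun i : Fin d => if (i : ℕ) < j + 1 then x i else y i) j s) = 0 := by
  have hxs := update_mem_cube hx j hs
  simp_rw [← mix_update_eq_update_mix]
  refine ⟨(continuousOn_comp_mix hfc _ hxs).eq_zero_of_setIntegral_eq_zero (isCompact_cube d)
    (cube_subset_closure_interior d) fun y hy => hfnn _ (mix_mem_cube _ hxs hy), fun h => ?_⟩
  rw [sFun, setIntegral_congr_fun (measurableSet_cube d) h, integral_zero]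

end Vanishing

lemma AssumptionA.eq_zero_of_eq_zero_on_Icc {d : ℕ} {f : (Fin d → ℝ) → ℝ} (hA : AssumptionA d f)
    {x : Fin d → ℝ} (hx : x ∈ cube d) (i : Fin d) {t₁ t₂ : ℝ} (h₀ : 0 ≤ t₁) (h₁₂ : t₁ < t₂)
    (h₂ : t₂ ≤ 1) (h : ∀ t ∈ Icc t₁ t₂, f (update x i t) = 0) :
    ∀ t ∈ Icc (0:ℝ) 1, f (update x i t) = 0 :=
  (hA.2 i x hx).resolve_right fun hnull => by
    have : volume (Icc t₁ t₂) = 0 :=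
      measure_mono_null (fun t ht =>
        (⟨⟨h₀.trans ht.1, ht.2.trans h₂⟩, h t ht⟩ : t ∈ Icc (0:ℝ) 1 ∧ _)) hnull
    rw [Real.volume_Icc, ENNReal.ofReal_eq_zero] at this
    linarith

theorem intervalIntegral_sFun_succ_update_pos {d : ℕ} {f : (Fin d → ℝ) → ℝ} {x : Fin d → ℝ}
    (hfc : ContinuousOn f (cube d)) (hfnn : ∀ x ∈ cube d, 0 ≤ f x) (hA : AssumptionA d f)
    (hx : x ∈ cube d) (j : Fin d) (hc : 0 < sFun d f j x) {t₁ t₂ : ℝ} (h₀ : 0 ≤ t₁)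
    (h₁₂ : t₁ < t₂) (h₂ : t₂ ≤ 1) :
    0 < ∫ s in t₁..t₂, sFun d f (j + 1) (update x j s) := by
  have hsub : Icc t₁ t₂ ⊆ Icc 0 1 := Icc_subset_Icc h₀ h₂
  have hnn : ∀ s ∈ Icc (0:ℝ) 1, 0 ≤ sFun d f (j + 1) (update x j s) :=
    fun s hs => sFun_nonneg hfnn _ (update_mem_cube hx j hs)
  refine intervalIntegral.integral_pos h₁₂ ((continuousOn_sFun_update hfc hx j _).mono hsub)
    (fun s hs => hnn s (hsub (Ioc_subset_Icc_self hs))) ?_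
  by_contra! hzero
  have hsegment : ∀ y ∈ cube d, ∀ t ∈ Icc t₁ t₂,
      f (update (fun i : Fin d => if (i : ℕ) < j + 1 then x i else y i) j t) = 0 :=
    fun y hy t ht => (sFun_succ_update_eq_zero_iff hfc hfnn hx j (hsub ht)).1
      ((hzero t ht).antisymm (hnn t (hsub ht))) y hy
  have hline : ∀ s ∈ Icc (0:ℝ) 1, sFun d f (j + 1) (update x j s) = 0 := fun s hs =>
    (sFun_succ_update_eq_zero_iff hfc hfnn hx j hs).2 fun y hy =>
      hA.eq_zero_of_eq_zero_on_Icc (mix_mem_cube _ hx hy) j h₀ h₁₂ h₂ (hsegment y hy) s hs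
  have := sFun_eq_setIntegral_sFun_succ hfc hx j
  rw [setIntegral_congr_fun measurableSet_Icc hline, integral_zero] at this
  exact hc.ne' this

section KRinvSlice

variable {d : ℕ} {f : (Fin d → ℝ) → ℝ} {x : Fin d → ℝ}

lemma KRinv_congr {j : Fin d} {y : Fin d → ℝ} (h : ∀ i ≤ j, x i = y i) :
    KRinv d f x j = KRinv d f y j := by
  have hslice : ∀ t, sFun d f (j + 1) (update x j t) = sFun d f (j + 1) (update y j t) :=
    fun t => sFun_congr fun i hi => by
      rcases eq_or_ne i j with rfl | hij
      · simp
      · simp [update_of_ne hij, h i (Fin.le_def.2 (by omega))]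
  simp only [KRinv, sFun_congr (f := f) fun i hi => h i (le_of_lt hi), h j le_rfl, hslice]

lemma KRinv_update_self (j : Fin d) (t : ℝ) :
    KRinv d f (update x j t) j =
      if 0 < sFun d f j x then
        (∫ u in (0:ℝ)..t, sFun d f (j + 1) (update x j u)) / sFun d f j x
      else t := by
  simp only [KRinv, sFun_update_of_le le_rfl, update_self, update_idem]

lemma intervalIntegral_sFun_succ_update_one (hfc : ContinuousOn f (cube d)) (hx : x ∈ cube d)
    (j : Fin d) : ∫ u in (0:ℝ)..1, sFun d f (j + 1) (update x j u) = sFun d f j x := by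
  rw [intervalIntegral.integral_of_le zero_le_one, ← integral_Icc_eq_integral_Ioc,
    sFun_eq_setIntegral_sFun_succ hfc hx j]

lemma hasDerivWithinAt_KRinv_update_self (hfc : ContinuousOn f (cube d)) (hx : x ∈ cube d)
    (j : Fin d) (hc : 0 < sFun d f j x) {b : ℝ} (hb : b ∈ Icc (0:ℝ) 1) :
    HasDerivWithinAt (fun t => KRinv d f (update x j t) j)
      (sFun d f (j + 1) (update x j b) / sFun d f j x) (Icc 0 1) b := by
  simp only [KRinv_update_self, if_pos hc]
  exact (hasDerivWithinAt_integral_Icc (continuousOn_sFun_update hfc hx j _) hb).div_const _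

variable (hfc : ContinuousOn f (cube d)) (hfnn : ∀ x ∈ cube d, 0 ≤ f x) (hA : AssumptionA d f)
include hfc hfnn hA

lemma strictMonoOn_KRinv_update_self (hx : x ∈ cube d) (j : Fin d) :
    StrictMonoOn (fun t => KRinv d f (update x j t) j) (Icc 0 1) := by
  by_cases hc : 0 < sFun d f j x
  · have hprim := strictMonoOn_integral_of_pos
      ((continuousOn_sFun_update hfc hx j _).integrableOn_compact isCompact_Icc)
      fun _ _ h₀ h₁₂ h₂ => intervalIntegral_sFun_succ_update_pos hfc hfnn hA hx j hc h₀ h₁₂ h₂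
    simp only [KRinv_update_self, if_pos hc]
    exact fun t₁ h₁ t₂ h₂ h₁₂ => div_lt_div_of_pos_right (hprim h₁ h₂ h₁₂) hc
  · simp only [KRinv_update_self, if_neg hc]
    exact strictMonoOn_id

lemma bijOn_KRinv_update_self (hx : x ∈ cube d) (j : Fin d) :
    BijOn (fun t => KRinv d f (update x j t) j) (Icc 0 1) (Icc 0 1) := by
  by_cases hc : 0 < sFun d f j x
  · have hcont : ContinuousOn (fun t => KRinv d f (update x j t) j) (Icc 0 1) := fun b hb =>
      (hasDerivWithinAt_KRinv_update_self hfc hx j hc hb).continuousWithinAt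
    have h₀ : KRinv d f (update x j 0) j = 0 := by simp [KRinv_update_self, hc]
    have h₁ : KRinv d f (update x j 1) j = 1 := by
      simp [KRinv_update_self, hc, intervalIntegral_sFun_succ_update_one hfc hx j, hc.ne']
    simpa only [h₀, h₁] using hcont.bijOn_Icc_of_strictMonoOn zero_le_one
      (strictMonoOn_KRinv_update_self hfc hfnn hA hx j)
  · simp only [KRinv_update_self, if_neg hc]
    exact bijOn_id _

end KRinvSlice

theorem stmt1_general (d : ℕ) (f : (Fin d → ℝ) → ℝ)
    (hfc : ContinuousOn f (cube d))
    (hfnn : ∀ x ∈ cube d, 0 ≤ f x)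
    (hA : AssumptionA d f) :
    (∀ j : Fin d, ∀ x y : Fin d → ℝ, (∀ i : Fin d, i ≤ j → x i = y i) →
      KRinv d f x j = KRinv d f y j) ∧
    (∀ j : Fin d, ∀ x ∈ cube d,
      StrictMonoOn (fun t => KRinv d f (Function.update x j t) j) (Set.Icc (0:ℝ) 1) ∧
      Set.BijOn (fun t => KRinv d f (Function.update x j t) j) (Set.Icc (0:ℝ) 1)
        (Set.Icc (0:ℝ) 1)) ∧
    Set.BijOn (KRinv d f) (cube d) (cube d) ∧
    volume {x : Fin d → ℝ | x ∈ cube d ∧ sFun d f (d - 1) x = 0} = 0 ∧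
    (∀ x ∈ cube d, sFun d f (d - 1) x ≠ 0 →
      ∃ D : Fin d → ℝ,
        (∀ j : Fin d, HasDerivWithinAt (fun t => KRinv d f (Function.update x j t) j) (D j)
          (Set.Icc (0:ℝ) 1) (x j)) ∧
        ∏ j, D j = f x / ∫ y in cube d, f y) := by
  refine ⟨fun j x y h => KRinv_congr h,
    fun j x hx => ⟨strictMonoOn_KRinv_update_self hfc hfnn hA hx j,
      bijOn_KRinv_update_self hfc hfnn hA hx j⟩,
    bijOn_univ_pi_of_triangular (fun j x y h => KRinv_congr h)
      fun j x hx => bijOn_KRinv_update_self hfc hfnn hA hx j,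
    measure_mono_null (fun x ⟨hx, h⟩ => (⟨hx, ?_⟩ : x ∈ cube d ∧ f x = 0)) hA.1,
    fun x hx hne => ?_⟩
  · rw [← sFun_of_le (f := f) le_rfl x]
    exact sFun_eq_zero_of_le hfc hfnn hx (Nat.sub_le d 1) le_rfl h
  have hpos : ∀ k ≤ d - 1, sFun d f k x ≠ 0 := fun k hk h =>
    hne (sFun_eq_zero_of_le hfc hfnn hx hk (Nat.sub_le d 1) h)
  refine ⟨fun j => sFun d f (j + 1) x / sFun d f j x, fun j => ?_, ?_⟩
  · have hj := (sFun_nonneg hfnn j hx).lt_of_ne' (hpos j (by omega))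
    simpa using hasDerivWithinAt_KRinv_update_self hfc hx j hj (hx j trivial)
  · rw [Fin.prod_univ_eq_prod_range (fun i => sFun d f (i + 1) x / sFun d f i x),
      Finset.prod_range_div_of_ne_zero _ _ hpos, sFun_of_le le_rfl, sFun_zero]

theorem stmt1 (d : ℕ) (hd : 0 < d) (f : (Fin d → ℝ) → ℝ)
    (hfc : ContinuousOn f (cube d))
    (hfnn : ∀ x ∈ cube d, 0 ≤ f x)
    (hA : AssumptionA d f) :
    (∀ j : Fin d, ∀ x y : Fin d → ℝ, (∀ i : Fin d, i ≤ j → x i = y i) →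
      KRinv d f x j = KRinv d f y j) ∧
    (∀ j : Fin d, ∀ x ∈ cube d,
      StrictMonoOn (fun t => KRinv d f (Function.update x j t) j) (Set.Icc (0:ℝ) 1) ∧
      Set.BijOn (fun t => KRinv d f (Function.update x j t) j) (Set.Icc (0:ℝ) 1)
        (Set.Icc (0:ℝ) 1)) ∧
    Set.BijOn (KRinv d f) (cube d) (cube d) ∧
    volume {x : Fin d → ℝ | x ∈ cube d ∧ sFun d f (d - 1) x = 0} = 0 ∧
    (∀ x ∈ cube d, sFun d f (d - 1) x ≠ 0 →
      ∃ D : Fin d → ℝ,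
        (∀ j : Fin d, HasDerivWithinAt (fun t => KRinv d f (Function.update x j t) j) (D j)
          (Set.Icc (0:ℝ) 1) (x j)) ∧
        ∏ j, D j = f x / ∫ y in cube d, f y) :=
  stmt1_general d f hfc hfnn hA
end
end

section
/- Let f : [0,1]^d → [0,∞) be continuous and satisfy Assumption A, and let S be the inverse Knothe–Rosenblatt map of f. Then S maps Borel subsets of [0,1]^d to Borel subsets of [0,1]^d; consequently, the inverse map T := S^{-1} : [0,1]^d → [0,1]^d is a triangular, monotone (in each component strictly increasing in the last variable), Borel measurable bijection. -/
open MeasureTheory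

noncomputable section

open Classical in
noncomputable def KRmap (d : ℕ) (f : (Fin d → ℝ) → ℝ) (y : Fin d → ℝ) : Fin d → ℝ :=
  if y ∈ cube d then Function.invFunOn (KRinv d f) (cube d) y else y

/-!
The `j`-th component of `S` is `x ↦ F(x_{1:j-1}; x_j)`, where `F(x_{1:j-1}; ·)` is the conditional
distribution function of the `j`-th coordinate (the identity when the slice carries no mass). By
Fubini it runs from `0` to `1`, and Assumption A makes it strictly increasing: its density cannot
vanish on an interval, for then `f` would vanish on a segment of an axis-parallel line through a
point where it is positive. So `S` is triangular with increasing homeomorphisms of `[0, 1]` as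
components in the last variable; it is therefore a bijection of the cube, inverted coordinate by
coordinate, and the inverse is again triangular and increasing in the last variable. Once `f` is
extended continuously off the cube, `S` is Borel measurable, hence maps Borel sets to Borel sets
by the Lusin–Souslin theorem; this is the measurability of `T`.
-/

lemma eqOn_zero_of_setIntegral_eq_zero {X : Type*} [TopologicalSpace X] [MeasurableSpace X]
    {μ : Measure X} [μ.IsOpenPosMeasure] {s : Set X} {g : X → ℝ} (hs : MeasurableSet s)
    (hsi : s ⊆ closure (interior s)) (hgc : ContinuousOn g s) (hgi : IntegrableOn g s μ)
    (hg0 : ∀ x ∈ s, 0 ≤ g x) (h : ∫ x in s, g x ∂μ = 0) : Set.EqOn g 0 s :=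
  Measure.eqOn_of_ae_eq
    ((setIntegral_eq_zero_iff_of_nonneg_ae (ae_restrict_of_forall_mem hs hg0) hgi).1 h)
    hgc continuousOn_const hsi

namespace KR

open Set Function

variable {d : ℕ}

lemma isCompact_cube : IsCompact (cube d) := isCompact_univ_pi fun _ => isCompact_Icc

lemma measurableSet_cube : MeasurableSet (cube d) :=
  MeasurableSet.univ_pi fun _ => measurableSet_Icc

lemma mem_cube {x : Fin d → ℝ} : x ∈ cube d ↔ ∀ i, x i ∈ Icc (0:ℝ) 1 := mem_univ_pi

lemma cube_subset_closure_interior : cube d ⊆ closure (interior (cube d)) := by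
  rw [cube, interior_pi_set finite_univ, closure_pi_set, interior_Icc, closure_Ioo zero_ne_one]

lemma update_mem_cube {x : Fin d → ℝ} (hx : x ∈ cube d) (j : Fin d) {t : ℝ}
    (ht : t ∈ Icc (0:ℝ) 1) : update x j t ∈ cube d := by
  rw [mem_cube] at hx ⊢
  intro i
  rcases eq_or_ne i j with rfl | h
  · simpa using ht
  · simpa [update_of_ne h] using hx i

def splice (j : ℕ) (x y : Fin d → ℝ) : Fin d → ℝ := fun i => if (i : ℕ) < j then x i else y i

lemma sFun_eq (f : (Fin d → ℝ) → ℝ) (j : ℕ) (x : Fin d → ℝ) :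
    sFun d f j x = ∫ y in cube d, f (splice j x y) := rfl

lemma splice_mem_cube {j : ℕ} {x y : Fin d → ℝ} (hx : x ∈ cube d) (hy : y ∈ cube d) :
    splice j x y ∈ cube d := by
  rw [mem_cube] at *
  intro i
  unfold splice
  split_ifs
  exacts [hx i, hy i]

lemma continuous_splice (j : ℕ) :
    Continuous fun p : (Fin d → ℝ) × (Fin d → ℝ) => splice j p.1 p.2 := by
  refine continuous_pi fun i => ?_
  unfold splice
  split_ifs
  exacts [(continuous_apply i).comp continuous_fst, (continuous_apply i).comp continuous_snd]

lemma splice_congr_left {j : ℕ} {x x' : Fin d → ℝ} (h : ∀ i : Fin d, (i : ℕ) < j → x i = x' i)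
    (y : Fin d → ℝ) : splice j x y = splice j x' y := by
  funext i
  unfold splice
  split_ifs with hi
  exacts [h i hi, rfl]

lemma splice_succ_update (j : Fin d) (x y : Fin d → ℝ) (t : ℝ) :
    splice (j + 1) (update x j t) y = update (splice j x y) j t := by
  funext i
  rcases eq_or_ne i j with rfl | hij
  · simp [splice]
  · have : (i : ℕ) ≠ j := Fin.val_ne_of_ne hij
    simp only [splice, update_of_ne hij]
    split_ifs <;> first | rfl | omega

lemma splice_update_right (j : Fin d) (x y : Fin d → ℝ) (t : ℝ) :
    splice j x (update y j t) = update (splice j x y) j t := by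
  funext i
  rcases eq_or_ne i j with rfl | hij
  · simp [splice]
  · simp only [splice, update_of_ne hij]

def cubeProj (x : Fin d → ℝ) : Fin d → ℝ := fun i => projIcc 0 1 zero_le_one (x i)

lemma continuous_cubeProj : Continuous (cubeProj (d := d)) :=
  continuous_pi fun i => continuous_subtype_val.comp (continuous_projIcc.comp (continuous_apply i))

lemma cubeProj_mem_cube (x : Fin d → ℝ) : cubeProj x ∈ cube d :=
  mem_cube.2 fun i => (projIcc 0 1 zero_le_one (x i)).2

lemma cubeProj_of_mem {x : Fin d → ℝ} (hx : x ∈ cube d) : cubeProj x = x :=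
  funext fun i => congrArg Subtype.val (projIcc_of_mem zero_le_one (mem_cube.1 hx i))

lemma continuous_comp_cubeProj {f : (Fin d → ℝ) → ℝ} (hfc : ContinuousOn f (cube d)) :
    Continuous (f ∘ cubeProj) :=
  hfc.comp_continuous continuous_cubeProj cubeProj_mem_cube

lemma eqOn_comp_cubeProj (f : (Fin d → ℝ) → ℝ) : EqOn (f ∘ cubeProj) f (cube d) :=
  fun _ hx => congrArg f (cubeProj_of_mem hx)

section

variable {f : (Fin d → ℝ) → ℝ}

lemma continuousOn_comp_splice (hfc : ContinuousOn f (cube d)) (j : ℕ) {x : Fin d → ℝ}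
    (hx : x ∈ cube d) : ContinuousOn (fun y => f (splice j x y)) (cube d) :=
  hfc.comp ((continuous_splice j).comp (Continuous.prodMk_right x)).continuousOn
    fun _ hy => splice_mem_cube hx hy

lemma sFun_nonneg (hfnn : ∀ x ∈ cube d, 0 ≤ f x) (j : ℕ) {x : Fin d → ℝ} (hx : x ∈ cube d) :
    0 ≤ sFun d f j x :=
  setIntegral_nonneg measurableSet_cube fun _ hy => hfnn _ (splice_mem_cube hx hy)

lemma sFun_congr {j : ℕ} {x x' : Fin d → ℝ} (h : ∀ i : Fin d, (i : ℕ) < j → x i = x' i) :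
    sFun d f j x = sFun d f j x' := by
  simp only [sFun_eq, splice_congr_left h]

lemma sFun_congr_of_eqOn {g : (Fin d → ℝ) → ℝ} (hfg : EqOn f g (cube d)) (j : ℕ)
    {x : Fin d → ℝ} (hx : x ∈ cube d) : sFun d f j x = sFun d g j x :=
  setIntegral_congr_fun measurableSet_cube fun _ hy => hfg (splice_mem_cube hx hy)

lemma continuous_sFun (hf : Continuous f) (j : ℕ) : Continuous (sFun d f j) :=
  continuous_parametric_integral_of_continuous (f := fun x y => f (splice j x y))
    (hf.comp (continuous_splice j)) isCompact_cube

lemma continuousOn_sFun (hfc : ContinuousOn f (cube d)) (j : ℕ) :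
    ContinuousOn (sFun d f j) (cube d) :=
  (continuous_sFun (continuous_comp_cubeProj hfc) j).continuousOn.congr
    fun _ hx => sFun_congr_of_eqOn (eqOn_comp_cubeProj f).symm j hx

lemma insertNth_mem_cube_iff {n : ℕ} (j : Fin (n + 1)) (t : ℝ) (z : Fin n → ℝ) :
    j.insertNth t z ∈ cube (n + 1) ↔ t ∈ Icc (0:ℝ) 1 ∧ z ∈ cube n := by
  simp only [mem_cube, Fin.forall_iff_succAbove j, Fin.insertNth_apply_same,
    Fin.insertNth_apply_succAbove]

lemma setIntegral_cube_succ {n : ℕ} {G : (Fin (n + 1) → ℝ) → ℝ}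
    (hG : ContinuousOn G (cube (n + 1))) (j : Fin (n + 1)) :
    ∫ y in cube (n + 1), G y = ∫ t in Icc (0:ℝ) 1, ∫ z in cube n, G (j.insertNth t z) := by
  set e := (MeasurableEquiv.piFinSuccAbove (fun _ : Fin (n + 1) => ℝ) j).symm
  have he : MeasurePreserving e (volume.prod volume) volume :=
    (volume_preserving_piFinSuccAbove (fun _ : Fin (n + 1) => ℝ) j).symm _
  have hpre : e ⁻¹' cube (n + 1) = Icc 0 1 ×ˢ cube n := by
    ext ⟨t, z⟩
    exact insertNth_mem_cube_iff j t z
  have hint : IntegrableOn (fun p : ℝ × (Fin n → ℝ) => G (j.insertNth p.1 p.2))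
      (Icc 0 1 ×ˢ cube n) (volume.prod volume) := by
    refine ContinuousOn.integrableOn_compact (isCompact_Icc.prod isCompact_cube) ?_
    have hins := Continuous.finInsertNth (A := fun _ => ℝ) j continuous_fst continuous_snd
    exact hG.comp hins.continuousOn fun p hp => (insertNth_mem_cube_iff j p.1 p.2).2 hp
  rw [← he.setIntegral_preimage_emb e.measurableEmbedding, hpre]
  exact setIntegral_prod _ hint

lemma setIntegral_setIntegral_cube_update {n : ℕ} {G : (Fin (n + 1) → ℝ) → ℝ}
    (hG : ContinuousOn G (cube (n + 1))) (j : Fin (n + 1)) :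
    ∫ t in Icc (0:ℝ) 1, ∫ y in cube (n + 1), G (update y j t) = ∫ y in cube (n + 1), G y := by
  rw [setIntegral_cube_succ hG j]
  refine setIntegral_congr_fun measurableSet_Icc fun t ht => ?_
  have hGt : ContinuousOn (fun y => G (update y j t)) (cube (n + 1)) :=
    hG.comp (continuous_id.update j continuous_const).continuousOn
      fun y hy => update_mem_cube hy j ht
  simp [setIntegral_cube_succ hGt j, Fin.update_insertNth]

/-- With `0`-based coordinates, `condDensity d f x j t` is the paper's `s_{j+1}(x_{1:j}, t)`. -/
def condDensity (d : ℕ) (f : (Fin d → ℝ) → ℝ) (x : Fin d → ℝ) (j : Fin d) (t : ℝ) : ℝ :=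
  sFun d f (j + 1) (update x j t)

lemma setIntegral_condDensity (hfc : ContinuousOn f (cube d)) {x : Fin d → ℝ} (hx : x ∈ cube d)
    (j : Fin d) : ∫ t in Icc (0:ℝ) 1, condDensity d f x j t = sFun d f j x := by
  obtain ⟨n, rfl⟩ : ∃ n, d = n + 1 := ⟨d - 1, (Nat.succ_pred_eq_of_pos j.pos).symm⟩
  rw [sFun_eq, ← setIntegral_setIntegral_cube_update (continuousOn_comp_splice hfc j hx) j]
  simp only [condDensity, sFun_eq, splice_succ_update, splice_update_right]

lemma condDensity_congr {j : Fin d} {x x' : Fin d → ℝ} (h : ∀ i < j, x i = x' i) :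
    condDensity d f x j = condDensity d f x' j := by
  funext t
  refine sFun_congr fun i hi => ?_
  rcases eq_or_ne i j with rfl | hij
  · simp
  · rw [update_of_ne hij, update_of_ne hij]
    exact h i (lt_of_le_of_ne (Nat.lt_succ_iff.1 hi) hij)

lemma condDensity_nonneg (hfnn : ∀ x ∈ cube d, 0 ≤ f x) {x : Fin d → ℝ} (hx : x ∈ cube d)
    (j : Fin d) {t : ℝ} (ht : t ∈ Icc (0:ℝ) 1) : 0 ≤ condDensity d f x j t :=
  sFun_nonneg hfnn _ (update_mem_cube hx j ht)

lemma continuousOn_condDensity (hfc : ContinuousOn f (cube d)) {x : Fin d → ℝ} (hx : x ∈ cube d)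
    (j : Fin d) : ContinuousOn (condDensity d f x j) (Icc 0 1) :=
  (continuousOn_sFun hfc _).comp
    ((continuous_const : Continuous fun _ : ℝ => x).update j continuous_id).continuousOn
    fun _ ht => update_mem_cube hx j ht

/-- Were the density zero on `(a, b)`, then `f` would vanish on a segment of an axis-parallel line
through a point of the slice where `f ≠ 0`, against Assumption A. -/
lemma exists_condDensity_ne_zero (hfc : ContinuousOn f (cube d))
    (hfnn : ∀ x ∈ cube d, 0 ≤ f x) (hA : AssumptionA d f) {x : Fin d → ℝ} (hx : x ∈ cube d)
    {j : Fin d} (hpos : 0 < sFun d f j x) {a b : ℝ} (hab : a < b) (hsub : Ioo a b ⊆ Icc 0 1) :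
    ∃ t ∈ Ioo a b, condDensity d f x j t ≠ 0 := by
  obtain ⟨y, hy, hfy⟩ : ∃ y ∈ cube d, f (splice j x y) ≠ 0 := by
    by_contra! h
    rw [sFun_eq, setIntegral_congr_fun measurableSet_cube h, integral_zero] at hpos
    exact hpos.false
  have hp : splice j x y ∈ cube d := splice_mem_cube hx hy
  by_contra! hzero
  have hline : Ioo a b ⊆ {t | t ∈ Icc (0:ℝ) 1 ∧ f (update (splice j x y) j t) = 0} := by
    intro t ht
    have hxt := update_mem_cube hx j (hsub ht)
    have hslice := continuousOn_comp_splice hfc (j + 1) hxt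
    have := eqOn_zero_of_setIntegral_eq_zero measurableSet_cube cube_subset_closure_interior
      hslice (hslice.integrableOn_compact isCompact_cube)
      (fun z hz => hfnn _ (splice_mem_cube hxt hz)) (hzero t ht) hy
    exact ⟨hsub ht, by simpa [splice_succ_update] using this⟩
  rcases hA.2 j _ hp with hvanish | hnull
  · exact hfy (by simpa using hvanish _ (mem_cube.1 hp j))
  · have := measure_mono_null hline hnull
    simp only [Real.volume_Ioo, ENNReal.ofReal_eq_zero, tsub_le_iff_right, zero_add] at this
    exact this.not_gt hab

lemma intervalIntegral_condDensity_pos (hfc : ContinuousOn f (cube d))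
    (hfnn : ∀ x ∈ cube d, 0 ≤ f x) (hA : AssumptionA d f) {x : Fin d → ℝ} (hx : x ∈ cube d)
    {j : Fin d} (hpos : 0 < sFun d f j x) {a b : ℝ} (ha : a ∈ Icc (0:ℝ) 1)
    (hb : b ∈ Icc (0:ℝ) 1) (hab : a < b) : 0 < ∫ t in a..b, condDensity d f x j t := by
  have hsub : Ioo a b ⊆ Icc 0 1 := Ioo_subset_Icc_self.trans (Icc_subset_Icc ha.1 hb.2)
  have hcont := (continuousOn_condDensity hfc hx j).mono hsub
  have hnn : ∀ t ∈ Ioo a b, 0 ≤ condDensity d f x j t :=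
    fun t ht => condDensity_nonneg hfnn hx j (hsub ht)
  rw [intervalIntegral.integral_of_le hab.le, integral_Ioc_eq_integral_Ioo]
  refine (setIntegral_nonneg measurableSet_Ioo hnn).lt_of_ne' fun h0 => ?_
  obtain ⟨t, ht, hne⟩ := exists_condDensity_ne_zero hfc hfnn hA hx hpos hab hsub
  refine hne (eqOn_zero_of_setIntegral_eq_zero measurableSet_Ioo ?_ hcont ?_ hnn h0 ht)
  · rw [isOpen_Ioo.interior_eq]
    exact subset_closure
  · exact ((continuousOn_condDensity hfc hx j).integrableOn_Icc).mono_set hsub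

def condCDF (d : ℕ) (f : (Fin d → ℝ) → ℝ) (x : Fin d → ℝ) (j : Fin d) (t : ℝ) : ℝ :=
  if 0 < sFun d f j x then (∫ s in (0:ℝ)..t, condDensity d f x j s) / sFun d f j x else t

lemma KRinv_apply (x : Fin d → ℝ) (j : Fin d) : KRinv d f x j = condCDF d f x j (x j) := rfl

lemma condCDF_congr {j : Fin d} {x x' : Fin d → ℝ} (h : ∀ i < j, x i = x' i) :
    condCDF d f x j = condCDF d f x' j := by
  unfold condCDF
  rw [condDensity_congr h, sFun_congr (j := j) fun i hi => h i hi]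

lemma condCDF_zero (x : Fin d → ℝ) (j : Fin d) : condCDF d f x j 0 = 0 := by
  unfold condCDF
  split_ifs <;> simp

lemma condCDF_one (hfc : ContinuousOn f (cube d)) {x : Fin d → ℝ} (hx : x ∈ cube d) (j : Fin d) :
    condCDF d f x j 1 = 1 := by
  unfold condCDF
  split_ifs with hpos
  · rw [intervalIntegral.integral_of_le zero_le_one, ← integral_Icc_eq_integral_Ioc,
      setIntegral_condDensity hfc hx j, div_self hpos.ne']
  · rfl

lemma continuousOn_condCDF (hfc : ContinuousOn f (cube d)) {x : Fin d → ℝ} (hx : x ∈ cube d)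
    (j : Fin d) : ContinuousOn (condCDF d f x j) (Icc 0 1) := by
  unfold condCDF
  split_ifs
  · refine ContinuousOn.div_const ?_ _
    have := intervalIntegral.continuousOn_primitive_interval (a := 0) (b := 1) (μ := volume)
      (f := condDensity d f x j) ?_
    · rwa [uIcc_of_le zero_le_one] at this
    · rw [uIcc_of_le zero_le_one]
      exact (continuousOn_condDensity hfc hx j).integrableOn_Icc
  · exact continuousOn_id

lemma strictMonoOn_condCDF (hfc : ContinuousOn f (cube d)) (hfnn : ∀ x ∈ cube d, 0 ≤ f x)
    (hA : AssumptionA d f) {x : Fin d → ℝ} (hx : x ∈ cube d) (j : Fin d) :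
    StrictMonoOn (condCDF d f x j) (Icc 0 1) := by
  unfold condCDF
  split_ifs with hpos
  · intro a ha b hb hab
    have hint : ∀ c ∈ Icc (0:ℝ) 1, IntervalIntegrable (condDensity d f x j) volume 0 c :=
      fun c hc => ((continuousOn_condDensity hfc hx j).mono
        (uIcc_subset_Icc (left_mem_Icc.2 zero_le_one) hc)).intervalIntegrable
    refine div_lt_div_of_pos_right ?_ hpos
    rw [← sub_pos, intervalIntegral.integral_interval_sub_left (hint b hb) (hint a ha)]
    exact intervalIntegral_condDensity_pos hfc hfnn hA hx hpos ha hb hab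
  · exact strictMonoOn_id

lemma bijOn_condCDF (hfc : ContinuousOn f (cube d)) (hfnn : ∀ x ∈ cube d, 0 ≤ f x)
    (hA : AssumptionA d f) {x : Fin d → ℝ} (hx : x ∈ cube d) (j : Fin d) :
    BijOn (condCDF d f x j) (Icc 0 1) (Icc 0 1) := by
  have hmono := strictMonoOn_condCDF hfc hfnn hA hx j
  have h0 : (0:ℝ) ∈ Icc (0:ℝ) 1 := left_mem_Icc.2 zero_le_one
  have h1 : (1:ℝ) ∈ Icc (0:ℝ) 1 := right_mem_Icc.2 zero_le_one
  refine ⟨fun t ht => ?_, hmono.injOn, ?_⟩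
  · rw [← condCDF_zero (f := f) x j, ← condCDF_one hfc hx j]
    exact ⟨hmono.monotoneOn h0 ht ht.1, hmono.monotoneOn ht h1 ht.2⟩
  · have := intermediate_value_Icc zero_le_one (continuousOn_condCDF hfc hx j)
    rwa [condCDF_zero, condCDF_one hfc hx j] at this

lemma KRinv_congr {j : Fin d} {x x' : Fin d → ℝ} (h : ∀ i ≤ j, x i = x' i) :
    KRinv d f x j = KRinv d f x' j := by
  rw [KRinv_apply, KRinv_apply, condCDF_congr fun i hi => h i hi.le, h j le_rfl]

lemma mapsTo_KRinv (hfc : ContinuousOn f (cube d)) (hfnn : ∀ x ∈ cube d, 0 ≤ f x)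
    (hA : AssumptionA d f) : MapsTo (KRinv d f) (cube d) (cube d) :=
  fun _ hx => mem_cube.2 fun j => (bijOn_condCDF hfc hfnn hA hx j).mapsTo (mem_cube.1 hx j)

lemma eq_of_KRinv_eq (hfc : ContinuousOn f (cube d)) (hfnn : ∀ x ∈ cube d, 0 ≤ f x)
    (hA : AssumptionA d f) {u v : Fin d → ℝ} (hu : u ∈ cube d) (hv : v ∈ cube d) {k : ℕ}
    (h : ∀ i : Fin d, (i : ℕ) < k → KRinv d f u i = KRinv d f v i) :
    ∀ i : Fin d, (i : ℕ) < k → u i = v i := by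
  intro i
  induction i using WellFoundedLT.induction with
  | _ i ih =>
    intro hi
    have hcdf : condCDF d f u i = condCDF d f v i :=
      condCDF_congr fun l hl => ih l hl (lt_trans hl hi)
    have := h i hi
    rw [KRinv_apply, KRinv_apply, hcdf] at this
    exact (bijOn_condCDF hfc hfnn hA hv i).injOn (mem_cube.1 hu i) (mem_cube.1 hv i) this

lemma exists_KRinv_eq_of_lt (hfc : ContinuousOn f (cube d)) (hfnn : ∀ x ∈ cube d, 0 ≤ f x)
    (hA : AssumptionA d f) {y : Fin d → ℝ} (hy : y ∈ cube d) (k : ℕ) :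
    ∃ x ∈ cube d, ∀ i : Fin d, (i : ℕ) < k → KRinv d f x i = y i := by
  induction k with
  | zero => exact ⟨y, hy, fun i hi => absurd hi (Nat.not_lt_zero _)⟩
  | succ k ih =>
    obtain ⟨x, hx, hxy⟩ := ih
    by_cases hk : k < d
    swap
    · exact ⟨x, hx, fun i hi => hxy i (by omega)⟩
    set j : Fin d := ⟨k, hk⟩
    obtain ⟨t, ht, hty⟩ := (bijOn_condCDF hfc hfnn hA hx j).surjOn (mem_cube.1 hy j)
    have hbelow : ∀ i < j, update x j t i = x i := fun i hi => update_of_ne hi.ne _ _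
    refine ⟨update x j t, update_mem_cube hx j ht, fun i hi => ?_⟩
    rcases Nat.lt_succ_iff_lt_or_eq.1 hi with hi | hi
    · rw [KRinv_congr fun l hl => hbelow l (lt_of_le_of_lt hl hi), hxy i hi]
    · obtain rfl : i = j := Fin.ext hi
      rw [KRinv_apply, update_self, condCDF_congr hbelow, hty]

lemma bijOn_KRinv (hfc : ContinuousOn f (cube d)) (hfnn : ∀ x ∈ cube d, 0 ≤ f x)
    (hA : AssumptionA d f) : BijOn (KRinv d f) (cube d) (cube d) := by
  refine ⟨mapsTo_KRinv hfc hfnn hA, fun u hu v hv h => ?_, fun y hy => ?_⟩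
  · exact funext fun i => eq_of_KRinv_eq hfc hfnn hA hu hv (fun l _ => congrFun h l) i i.2
  · obtain ⟨x, hx, hxy⟩ := exists_KRinv_eq_of_lt hfc hfnn hA hy d
    exact ⟨x, hx, funext fun i => hxy i i.2⟩

lemma measurable_KRinv (hf : Continuous f) : Measurable (KRinv d f) := by
  refine measurable_pi_lambda _ fun j => ?_
  have hs := continuous_sFun hf j
  have hprim : Continuous fun x => ∫ t in (0:ℝ)..x j, condDensity d f x j t :=
    intervalIntegral.continuous_parametric_intervalIntegral_of_continuous
      (f := fun x t => condDensity d f x j t)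
      ((continuous_sFun hf _).comp (continuous_fst.update j continuous_snd)) (continuous_apply j)
  exact Measurable.ite (measurableSet_lt measurable_const hs.measurable)
    (hprim.measurable.div hs.measurable) (measurable_pi_apply j)

lemma KRinv_eqOn_of_eqOn {g : (Fin d → ℝ) → ℝ} (hfg : EqOn f g (cube d)) :
    EqOn (KRinv d f) (KRinv d g) (cube d) := by
  intro x hx
  funext j
  have hdens : EqOn (condDensity d f x j) (condDensity d g x j) (uIcc 0 (x j)) :=
    fun t ht => sFun_congr_of_eqOn hfg _
      (update_mem_cube hx j (uIcc_subset_Icc (left_mem_Icc.2 zero_le_one) (mem_cube.1 hx j) ht))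
  rw [KRinv_apply, KRinv_apply, condCDF, condCDF, sFun_congr_of_eqOn hfg j hx,
    intervalIntegral.integral_congr hdens]

/-- Lusin–Souslin, applied to the continuous extension `f ∘ cubeProj`, which has the same
inverse KR map on the cube. -/
lemma measurableSet_image_KRinv (hfc : ContinuousOn f (cube d))
    (hfnn : ∀ x ∈ cube d, 0 ≤ f x) (hA : AssumptionA d f) {B : Set (Fin d → ℝ)}
    (hB : B ⊆ cube d) (hBm : MeasurableSet B) : MeasurableSet (KRinv d f '' B) := by
  have hext := (KRinv_eqOn_of_eqOn (eqOn_comp_cubeProj f).symm).mono hB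
  rw [hext.image_eq]
  exact hBm.image_of_measurable_injOn (measurable_KRinv (continuous_comp_cubeProj hfc))
    (((bijOn_KRinv hfc hfnn hA).injOn.mono hB).congr hext)

lemma invOn_KRmap (hbij : BijOn (KRinv d f) (cube d) (cube d)) :
    InvOn (KRmap d f) (KRinv d f) (cube d) (cube d) := by
  have h := hbij.invOn_invFunOn
  refine ⟨fun x hx => ?_, fun y hy => ?_⟩
  · rw [KRmap, if_pos (hbij.mapsTo hx)]
    exact h.1 hx
  · rw [KRmap, if_pos hy]
    exact h.2 hy

lemma bijOn_KRmap (hbij : BijOn (KRinv d f) (cube d) (cube d)) :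
    BijOn (KRmap d f) (cube d) (cube d) :=
  hbij.symm (invOn_KRmap hbij).symm

lemma preimage_KRmap (hbij : BijOn (KRinv d f) (cube d) (cube d)) (A : Set (Fin d → ℝ)) :
    KRmap d f ⁻¹' A = KRinv d f '' (A ∩ cube d) ∪ A \ cube d := by
  have hinv := invOn_KRmap hbij
  ext y
  by_cases hy : y ∈ cube d
  · refine ⟨fun hyA => Or.inl ⟨KRmap d f y, ⟨hyA, (bijOn_KRmap hbij).mapsTo hy⟩, hinv.2 hy⟩, ?_⟩
    rintro (⟨x, ⟨hxA, hx⟩, rfl⟩ | ⟨-, hy'⟩)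
    · rwa [mem_preimage, hinv.1 hx]
    · exact absurd hy hy'
  · have hy' : y ∉ KRinv d f '' (A ∩ cube d) := fun ⟨_, ⟨_, hx⟩, hxy⟩ =>
      hy (hxy ▸ hbij.mapsTo hx)
    simp [KRmap, hy, hy']

lemma measurable_KRmap (hfc : ContinuousOn f (cube d)) (hfnn : ∀ x ∈ cube d, 0 ≤ f x)
    (hA : AssumptionA d f) : Measurable (KRmap d f) := fun A hAm => by
  rw [preimage_KRmap (bijOn_KRinv hfc hfnn hA)]
  exact (measurableSet_image_KRinv hfc hfnn hA inter_subset_right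
    (hAm.inter measurableSet_cube)).union (hAm.diff measurableSet_cube)

lemma KRmap_eq_of_lt (hfc : ContinuousOn f (cube d)) (hfnn : ∀ x ∈ cube d, 0 ≤ f x)
    (hA : AssumptionA d f) {x y : Fin d → ℝ} (hx : x ∈ cube d) (hy : y ∈ cube d) {k : ℕ}
    (h : ∀ i : Fin d, (i : ℕ) < k → x i = y i) :
    ∀ i : Fin d, (i : ℕ) < k → KRmap d f x i = KRmap d f y i := by
  have hbij := bijOn_KRinv hfc hfnn hA
  have hinv := invOn_KRmap hbij
  refine eq_of_KRinv_eq hfc hfnn hA ((bijOn_KRmap hbij).mapsTo hx) ((bijOn_KRmap hbij).mapsTo hy)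
    fun i hi => ?_
  rw [hinv.2 hx, hinv.2 hy]
  exact h i hi

lemma strictMonoOn_KRmap_update (hfc : ContinuousOn f (cube d))
    (hfnn : ∀ x ∈ cube d, 0 ≤ f x) (hA : AssumptionA d f) {x : Fin d → ℝ} (hx : x ∈ cube d)
    (j : Fin d) : StrictMonoOn (fun t => KRmap d f (update x j t) j) (Icc 0 1) := by
  intro t ht t' ht' htt'
  have hbij := bijOn_KRinv hfc hfnn hA
  have hxt := update_mem_cube hx j ht
  have hxt' := update_mem_cube hx j ht'
  set u := KRmap d f (update x j t)
  set u' := KRmap d f (update x j t')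
  have hu : u ∈ cube d := (bijOn_KRmap hbij).mapsTo hxt
  have hu' : u' ∈ cube d := (bijOn_KRmap hbij).mapsTo hxt'
  have hcdf : condCDF d f u j = condCDF d f u' j :=
    condCDF_congr fun i hi => KRmap_eq_of_lt hfc hfnn hA hxt hxt'
      (fun l hl => by simp [update_of_ne (Fin.ne_of_lt hl)]) i hi
  have hKu : condCDF d f u' j (u j) = t := by
    rw [← hcdf, ← KRinv_apply, (invOn_KRmap hbij).2 hxt, update_self]
  have hKu' : condCDF d f u' j (u' j) = t' := by
    rw [← KRinv_apply, (invOn_KRmap hbij).2 hxt', update_self]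
  refine ((strictMonoOn_condCDF hfc hfnn hA hu' j).lt_iff_lt (mem_cube.1 hu j)
    (mem_cube.1 hu' j)).1 ?_
  rwa [hKu, hKu']

end

end KR

open KR in
theorem stmt2_general (d : ℕ) (f : (Fin d → ℝ) → ℝ)
    (hfc : ContinuousOn f (cube d))
    (hfnn : ∀ x ∈ cube d, 0 ≤ f x)
    (hA : AssumptionA d f) :
    (∀ B : Set (Fin d → ℝ), B ⊆ cube d → MeasurableSet B → MeasurableSet (KRinv d f '' B)) ∧
    Measurable (KRmap d f) ∧
    Set.BijOn (KRmap d f) (cube d) (cube d) ∧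
    Set.InvOn (KRmap d f) (KRinv d f) (cube d) (cube d) ∧
    (∀ j : Fin d, ∀ x y : Fin d → ℝ, x ∈ cube d → y ∈ cube d →
      (∀ i : Fin d, i ≤ j → x i = y i) → KRmap d f x j = KRmap d f y j) ∧
    (∀ j : Fin d, ∀ x ∈ cube d,
      StrictMonoOn (fun t => KRmap d f (Function.update x j t) j) (Set.Icc (0:ℝ) 1)) := by
  have hbij := bijOn_KRinv hfc hfnn hA
  refine ⟨fun B hB hBm => measurableSet_image_KRinv hfc hfnn hA hB hBm,
    measurable_KRmap hfc hfnn hA, bijOn_KRmap hbij, invOn_KRmap hbij, ?_,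
    fun j x hx => strictMonoOn_KRmap_update hfc hfnn hA hx j⟩
  intro j x y hx hy h
  exact KRmap_eq_of_lt hfc hfnn hA hx hy (k := j + 1) (fun i hi => h i (Nat.lt_succ_iff.1 hi)) j
    (Nat.lt_succ_self _)

theorem stmt2 (d : ℕ) (hd : 0 < d) (f : (Fin d → ℝ) → ℝ)
    (hfc : ContinuousOn f (cube d))
    (hfnn : ∀ x ∈ cube d, 0 ≤ f x)
    (hA : AssumptionA d f) :
    (∀ B : Set (Fin d → ℝ), B ⊆ cube d → MeasurableSet B → MeasurableSet (KRinv d f '' B)) ∧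
    Measurable (KRmap d f) ∧
    Set.BijOn (KRmap d f) (cube d) (cube d) ∧
    Set.InvOn (KRmap d f) (KRinv d f) (cube d) (cube d) ∧
    (∀ j : Fin d, ∀ x y : Fin d → ℝ, x ∈ cube d → y ∈ cube d →
      (∀ i : Fin d, i ≤ j → x i = y i) → KRmap d f x j = KRmap d f y j) ∧
    (∀ j : Fin d, ∀ x ∈ cube d,
      StrictMonoOn (fun t => KRmap d f (Function.update x j t) j) (Set.Icc (0:ℝ) 1)) :=
  stmt2_general d f hfc hfnn hA
end
end

section
/- Let π and ρ be probability measures on [0,1]^d that are absolutely continuous with respect to Lebesgue measure, with unnormalized densities f̂_π = c_π f_π and f̂_ρ = c_ρ f_ρ, where c_π, c_ρ > 0 and f_π, f_ρ are the (normalized) Lebesgue densities. Then d_H(π, ρ) ≤ (2 / √c_ρ) · ‖√f̂_π − √f̂_ρ‖_{L²([0,1]^d)}. -/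
/-!
In `L²(μ)` the functions `u = √f_π` and `v = √f_ρ` are unit vectors, and the square roots of the
unnormalized densities are `a • u` and `b • v` with `a = √c_π`, `b = √c_ρ`. The reverse triangle
inequality gives `|a - b| = |‖a • u‖ - ‖b • v‖| ≤ ‖a • u - b • v‖`, hence
`b ‖u - v‖ = ‖(a • u - b • v) - (a - b) • u‖ ≤ 2 ‖a • u - b • v‖`.
-/

open MeasureTheory

noncomputable section

theorem mul_norm_sub_le_two_mul_norm_smul_sub_smul {E : Type*} [SeminormedAddCommGroup E]
    [NormedSpace ℝ E] {u v : E} (hu : ‖u‖ = 1) (hv : ‖v‖ = 1) {a b : ℝ} (ha : 0 ≤ a)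
    (hb : 0 ≤ b) : b * ‖u - v‖ ≤ 2 * ‖a • u - b • v‖ := by
  have hab : |a - b| ≤ ‖a • u - b • v‖ := by
    calc |a - b| = |‖a • u‖ - ‖b • v‖| := by
          rw [norm_smul, norm_smul, hu, hv, Real.norm_of_nonneg ha, Real.norm_of_nonneg hb,
            mul_one, mul_one]
      _ ≤ ‖a • u - b • v‖ := abs_norm_sub_norm_le _ _
  calc b * ‖u - v‖ = ‖b • (u - v)‖ := by rw [norm_smul, Real.norm_of_nonneg hb]
    _ = ‖(a • u - b • v) - (a - b) • u‖ := by congr 1; module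
    _ ≤ ‖a • u - b • v‖ + |a - b| := by
        rw [← mul_one |a - b|, ← hu, ← Real.norm_eq_abs, ← norm_smul]
        exact norm_sub_le _ _
    _ ≤ 2 * ‖a • u - b • v‖ := by linarith

namespace MeasureTheory

variable {α : Type*} [MeasurableSpace α] {μ : Measure α} {f g : α → ℝ}

theorem MemLp.norm_toLp_two (hf : MemLp f 2 μ) : ‖hf.toLp f‖ = √(∫ x, f x ^ 2 ∂μ) := by
  have hsq : ‖hf.toLp f‖ ^ 2 = ∫ x, f x ^ 2 ∂μ := by
    rw [← real_inner_self_eq_norm_sq, L2.inner_def]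
    refine integral_congr_ae ?_
    filter_upwards [hf.coeFn_toLp] with x hx
    simp [hx, sq]
  rw [← hsq, Real.sqrt_sq (norm_nonneg _)]

theorem Integrable.memLp_two_sqrt (hf : Integrable f μ) (hf0 : 0 ≤ᵐ[μ] f) :
    MemLp (fun x => √(f x)) 2 μ := by
  rw [memLp_two_iff_integrable_sq (Real.continuous_sqrt.comp_aestronglyMeasurable
    hf.aestronglyMeasurable)]
  refine hf.congr ?_
  filter_upwards [hf0] with x hx using (Real.sq_sqrt hx).symm

theorem Integrable.norm_toLp_sqrt (hf : Integrable f μ) (hf0 : 0 ≤ᵐ[μ] f) :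
    ‖(hf.memLp_two_sqrt hf0).toLp _‖ = √(∫ x, f x ∂μ) := by
  rw [MemLp.norm_toLp_two]
  congr 1
  refine integral_congr_ae ?_
  filter_upwards [hf0] with x hx using Real.sq_sqrt hx

end MeasureTheory

section Hellinger

variable {α : Type*} [MeasurableSpace α]

def hellingerDist (μ : Measure α) (f g : α → ℝ) : ℝ :=
  √(∫ x, (√(f x) - √(g x)) ^ 2 ∂μ)

variable {μ : Measure α} {f g : α → ℝ}

theorem hellingerDist_const_mul_eq_norm_sub (hf : MemLp (fun x => √(f x)) 2 μ)
    (hg : MemLp (fun x => √(g x)) 2 μ) (hf0 : 0 ≤ᵐ[μ] f) (hg0 : 0 ≤ᵐ[μ] g) (a b : ℝ) :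
    hellingerDist μ (fun x => a * f x) (fun x => b * g x) = ‖√a • hf.toLp _ - √b • hg.toLp _‖ := by
  rw [← MemLp.toLp_const_smul, ← MemLp.toLp_const_smul, ← MemLp.toLp_sub,
    MemLp.norm_toLp_two, hellingerDist]
  congr 1
  refine integral_congr_ae ?_
  filter_upwards [hf0, hg0] with x hfx hgx
  simp only [Pi.sub_apply, Pi.smul_apply, smul_eq_mul, Real.sqrt_mul' _ hfx, Real.sqrt_mul' _ hgx]

theorem hellingerDist_le_two_div_sqrt_mul_hellingerDist (hf0 : 0 ≤ᵐ[μ] f) (hg0 : 0 ≤ᵐ[μ] g)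
    (hf1 : ∫ x, f x ∂μ = 1) (hg1 : ∫ x, g x ∂μ = 1) (a : ℝ) {b : ℝ} (hb : 0 < b) :
    hellingerDist μ f g ≤ 2 / √b * hellingerDist μ (fun x => a * f x) (fun x => b * g x) := by
  have hfi : Integrable f μ := .of_integral_ne_zero (by simp [hf1])
  have hgi : Integrable g μ := .of_integral_ne_zero (by simp [hg1])
  have hu := hfi.norm_toLp_sqrt hf0
  have hv := hgi.norm_toLp_sqrt hg0
  rw [hf1, Real.sqrt_one] at hu
  rw [hg1, Real.sqrt_one] at hv
  have hdist : hellingerDist μ f g =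
      ‖(hfi.memLp_two_sqrt hf0).toLp _ - (hgi.memLp_two_sqrt hg0).toLp _‖ := by
    simpa using hellingerDist_const_mul_eq_norm_sub (hfi.memLp_two_sqrt hf0)
      (hgi.memLp_two_sqrt hg0) hf0 hg0 1 1
  rw [hdist, hellingerDist_const_mul_eq_norm_sub _ _ hf0 hg0, div_mul_eq_mul_div,
    le_div_iff₀ (Real.sqrt_pos.mpr hb), mul_comm]
  exact mul_norm_sub_le_two_mul_norm_smul_sub_smul hu hv (Real.sqrt_nonneg a) (Real.sqrt_nonneg b)

end Hellinger

theorem stmt8_general (d : ℕ)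
    (fpi frho : (Fin d → ℝ) → ℝ) (cpi crho : ℝ) (hcrho : 0 < crho)
    (hfpinn : ∀ x ∈ cube d, 0 ≤ fpi x) (hfrhonn : ∀ x ∈ cube d, 0 ≤ frho x)
    (hfpi1 : ∫ x in cube d, fpi x = 1) (hfrho1 : ∫ x in cube d, frho x = 1) :
    Real.sqrt (∫ x in cube d, (Real.sqrt (fpi x) - Real.sqrt (frho x)) ^ 2)
      ≤ (2 / Real.sqrt crho) *
        Real.sqrt (∫ x in cube d,
          (Real.sqrt (cpi * fpi x) - Real.sqrt (crho * frho x)) ^ 2) := by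
  have hcube : MeasurableSet (cube d) := .univ_pi fun _ => measurableSet_Icc
  exact hellingerDist_le_two_div_sqrt_mul_hellingerDist (ae_restrict_of_forall_mem hcube hfpinn)
    (ae_restrict_of_forall_mem hcube hfrhonn) hfpi1 hfrho1 cpi hcrho

theorem stmt8 (d : ℕ) (hd : 0 < d)
    (fpi frho : (Fin d → ℝ) → ℝ) (cpi crho : ℝ) (hcpi : 0 < cpi) (hcrho : 0 < crho)
    (hfpim : Measurable fpi) (hfrhom : Measurable frho)
    (hfpinn : ∀ x ∈ cube d, 0 ≤ fpi x) (hfrhonn : ∀ x ∈ cube d, 0 ≤ frho x)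
    (hfpi1 : ∫ x in cube d, fpi x = 1) (hfrho1 : ∫ x in cube d, frho x = 1)
    (π ρ : Measure (Fin d → ℝ))
    (hπ : π = (volume.restrict (cube d)).withDensity fun x => ENNReal.ofReal (fpi x))
    (hρ : ρ = (volume.restrict (cube d)).withDensity fun x => ENNReal.ofReal (frho x)) :
    Real.sqrt (∫ x in cube d, (Real.sqrt (fpi x) - Real.sqrt (frho x)) ^ 2)
      ≤ (2 / Real.sqrt crho) *
        Real.sqrt (∫ x in cube d,
          (Real.sqrt (cpi * fpi x) - Real.sqrt (crho * frho x)) ^ 2) :=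
  stmt8_general d fpi frho cpi crho hcrho hfpinn hfrhonn hfpi1 hfrho1
end
end

section
/- Let n, k ∈ ℕ₀ with n ≠ k and let L_n(x) := √(2n+1) · P_n(2x − 1), where P_n is the degree-n Legendre polynomial on [−1,1] normalized by P_n(1) = 1. Then for every x ∈ [0,1], ∫_0^x L_n(t) L_k(t) dt = (x − x²) · (L_n(x) L_k′(x) − L_k(x) L_n′(x)) / ((n + k + 1)(n − k)). -/
/-!
Differentiating `(X² - 1) u' = 2n X u` for `u = (X² - 1)ⁿ` `n + 1` times turns Rodrigues'
formula into Legendre's equation, which after the substitution `t ↦ 2x - 1` reads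
`((x - x²) Qₙ')' = -n(n+1) Qₙ` for `Qₙ(x) = Pₙ(2x - 1)`. For two such Sturm–Liouville equations the
Lagrange identity gives `((x - x²)(Qₙ Qₖ' - Qₖ Qₙ'))' = (n(n+1) - k(k+1)) Qₙ Qₖ`, and the coefficient
`x - x²` vanishes at `0`, so integrating from `0` to `x` yields the formula, with
`n(n+1) - k(k+1) = (n+k+1)(n-k)`.
-/

open MeasureTheory

noncomputable section

noncomputable def legendreP (n : ℕ) : Polynomial ℝ :=
  Polynomial.C ((1 : ℝ) / ((2 : ℝ) ^ n * (n.factorial : ℝ))) *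
    (fun p => Polynomial.derivative p)^[n] ((Polynomial.X ^ 2 - 1) ^ n)

noncomputable def legL (n : ℕ) (x : ℝ) : ℝ :=
  Real.sqrt (2 * (n : ℝ) + 1) * (legendreP n).eval (2 * x - 1)

open Polynomial

section CommRing

variable {R : Type*} [CommRing R]

lemma X_sq_sub_one_mul_derivative_pow (n : ℕ) :
    (X ^ 2 - 1 : R[X]) * derivative ((X ^ 2 - 1) ^ n) = (2 * n : R[X]) * X * (X ^ 2 - 1) ^ n := by
  cases n with
  | zero => simp
  | succ m =>
    rw [derivative_pow_succ, derivative_sub, derivative_X_sq, derivative_one, sub_zero,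
      map_ofNat, C_add, C_1, C_eq_natCast]
    push_cast
    ring

lemma X_sq_sub_one_mul_iterate_derivative_pow (n j : ℕ) :
    (X ^ 2 - 1 : R[X]) * derivative^[j + 2] ((X ^ 2 - 1) ^ n)
      = (2 * n - 2 * (j + 1) : R[X]) * X * derivative^[j + 1] ((X ^ 2 - 1) ^ n)
        + ((j + 1) * (2 * n - j) : R[X]) * derivative^[j] ((X ^ 2 - 1) ^ n) := by
  induction j with
  | zero =>
    have h := congrArg derivative (X_sq_sub_one_mul_derivative_pow (R := R) n)
    simp only [derivative_mul, derivative_sub, derivative_X_sq, derivative_one,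
      derivative_X, map_ofNat, derivative_natCast, derivative_ofNat] at h
    simp only [Function.iterate_succ_apply', Function.iterate_zero_apply]
    push_cast at h ⊢
    linear_combination h
  | succ j ih =>
    have h := congrArg derivative ih
    simp only [Function.iterate_succ_apply'] at h ⊢
    simp only [derivative_mul, derivative_add, derivative_sub, derivative_X_sq, derivative_one,
      derivative_X, map_ofNat, derivative_natCast, derivative_ofNat] at h
    push_cast at h ⊢
    linear_combination h

lemma derivative_mul_wronskian {p f g : R[X]} {a b : R}
    (hf : derivative (p * derivative f) = -C a * f) (hg : derivative (p * derivative g) = -C b * g) :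
    derivative (p * (f * derivative g - g * derivative f)) = C (a - b) * (f * g) := by
  have hsplit : p * (f * derivative g - g * derivative f)
      = f * (p * derivative g) - g * (p * derivative f) := by ring
  rw [hsplit, derivative_sub, derivative_mul (f := f), derivative_mul (f := g), hf, hg, C_sub]
  ring

end CommRing

lemma legendreP_ode (n : ℕ) :
    (X ^ 2 - 1 : ℝ[X]) * derivative (derivative (legendreP n)) + 2 * X * derivative (legendreP n)
      = (n * (n + 1) : ℝ[X]) * legendreP n := by
  have h := X_sq_sub_one_mul_iterate_derivative_pow (R := ℝ) n n
  simp only [Function.iterate_succ_apply'] at h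
  simp only [legendreP, derivative_C_mul]
  linear_combination C ((1 : ℝ) / (2 ^ n * n.factorial)) * h

def shiftedLegendreP (n : ℕ) : ℝ[X] := (legendreP n).comp (2 * X - 1)

lemma derivative_shiftedLegendreP (n : ℕ) :
    derivative (shiftedLegendreP n) = 2 * (derivative (legendreP n)).comp (2 * X - 1) := by
  simp [shiftedLegendreP, derivative_comp, mul_comm]

lemma shiftedLegendreP_ode (n : ℕ) :
    derivative ((X - X ^ 2) * derivative (shiftedLegendreP n))
      = -C ((n : ℝ) * (n + 1)) * shiftedLegendreP n := by
  have h := congrArg (fun p => p.comp (2 * X - 1 : ℝ[X])) (legendreP_ode n)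
  simp only [add_comp, mul_comp, sub_comp, pow_comp, X_comp, one_comp, natCast_comp,
    ofNat_comp] at h
  rw [derivative_mul, derivative_shiftedLegendreP]
  simp only [derivative_mul, derivative_sub, derivative_X, derivative_X_sq, derivative_ofNat,
    derivative_one, map_ofNat, derivative_comp, C_mul, C_add, C_1, C_eq_natCast]
  rw [← shiftedLegendreP] at h
  push_cast at h ⊢
  linear_combination -h

lemma intervalIntegral_eval_derivative (p : ℝ[X]) (a b : ℝ) :
    ∫ t in a..b, (derivative p).eval t = p.eval b - p.eval a :=
  intervalIntegral.integral_eq_sub_of_hasDerivAt (fun t _ => p.hasDerivAt t)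
    ((Polynomial.continuous _).intervalIntegrable _ _)

lemma integral_shiftedLegendreP_mul {n k : ℕ} (hnk : n ≠ k) (x : ℝ) :
    ∫ t in (0 : ℝ)..x, (shiftedLegendreP n).eval t * (shiftedLegendreP k).eval t
      = (x - x ^ 2) * ((shiftedLegendreP n).eval x * (derivative (shiftedLegendreP k)).eval x
          - (shiftedLegendreP k).eval x * (derivative (shiftedLegendreP n)).eval x)
        / (((n : ℝ) + k + 1) * (n - k)) := by
  set W : ℝ[X] := (X - X ^ 2) * (shiftedLegendreP n * derivative (shiftedLegendreP k)
    - shiftedLegendreP k * derivative (shiftedLegendreP n))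
  have hW : derivative W = C (((n : ℝ) + k + 1) * (n - k))
      * (shiftedLegendreP n * shiftedLegendreP k) := by
    rw [derivative_mul_wronskian (shiftedLegendreP_ode n) (shiftedLegendreP_ode k)]
    congr 2
    ring
  have hc : ((n : ℝ) + k + 1) * (n - k) ≠ 0 :=
    mul_ne_zero (by positivity) (sub_ne_zero.2 (Nat.cast_injective.ne hnk))
  rw [eq_div_iff hc, mul_comm, ← intervalIntegral.integral_const_mul]
  simpa [hW, W] using intervalIntegral_eval_derivative W 0 x

lemma legL_eq (n : ℕ) : legL n = fun t => √(2 * n + 1) * (shiftedLegendreP n).eval t := by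
  ext t
  simp [legL, shiftedLegendreP, eval_comp]

lemma deriv_legL (n : ℕ) (t : ℝ) :
    deriv (legL n) t = √(2 * n + 1) * (derivative (shiftedLegendreP n)).eval t := by
  rw [legL_eq]
  exact (((shiftedLegendreP n).hasDerivAt t).const_mul _).deriv

theorem stmt19_general (n k : ℕ) (hnk : n ≠ k) (x : ℝ) :
    ∫ t in (0 : ℝ)..x, legL n t * legL k t
      = (x - x ^ 2) * (legL n x * deriv (legL k) x - legL k x * deriv (legL n) x)
        / (((n : ℝ) + (k : ℝ) + 1) * ((n : ℝ) - (k : ℝ))) := by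
  have hprod : ∀ t, legL n t * legL k t = (√(2 * n + 1) * √(2 * k + 1))
      * ((shiftedLegendreP n).eval t * (shiftedLegendreP k).eval t) := by
    intro t
    rw [legL_eq, legL_eq]
    ring
  simp only [hprod, intervalIntegral.integral_const_mul, integral_shiftedLegendreP_mul hnk,
    deriv_legL]
  rw [legL_eq, legL_eq]
  ring

theorem stmt19 (n k : ℕ) (hnk : n ≠ k) (x : ℝ) (hx : x ∈ Set.Icc (0 : ℝ) 1) :
    ∫ t in (0 : ℝ)..x, legL n t * legL k t
      = (x - x ^ 2) * (legL n x * deriv (legL k) x - legL k x * deriv (legL n) x)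
        / (((n : ℝ) + (k : ℝ) + 1) * ((n : ℝ) - (k : ℝ))) :=
  stmt19_general n k hnk x
end
end
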